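/- Let an l-group G act continuously on an l-space X, let χ : G → ℂˣ be a character, let U ⊆ X be an open G-invariant subset and Z := X \ U its closed complement (both with the subspace topology). If D(U)^{G,χ} = 0 and D(Z)^{G,χ} = 0, then D(X)^{G,χ} = 0. -/

import Mathlib

open scoped Classical

noncomputable section

/-- The space `S(X)` of compactly supported locally constant `ℂ`-valued functions
on a topological space `X`, as a `ℂ`-submodule of `X → ℂ`. -/
def SSp (X : Type*) [TopologicalSpace X] : Submodule ℂ (X → ℂ) where
  carrier := {f | IsLocallyConstant f ∧ HasCompactSupport f}
  add_mem' := fun hf hg => ⟨hf.1.add hg.1, hf.2.add hg.2⟩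
  zero_mem' := ⟨IsLocallyConstant.const 0, by
    simpa using (HasCompactSupport.zero : HasCompactSupport (fun _ : X => (0:ℂ)))⟩
  smul_mem' := fun c f hf =>
    ⟨hf.1.comp fun y => c • y, by
      simpa [Pi.smul_def, Pi.mul_def] using hf.2.smul_left (f := fun _ : X => c)⟩

/-- The space `D(X) = S(X)*` of distributions on `X`. -/
abbrev Dst (X : Type*) [TopologicalSpace X] := SSp X →ₗ[ℂ] ℂ

/-- `T ∈ D(X)^{G,χ}`: the distribution `T` on `X` is `(G,χ)`-equivariant for the
action of `G` on `X`, i.e. `g·T = χ(g)·T` where `(g·T)(f) = T(x ↦ f(g·x))`. -/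
def IsEqvDist {X : Type*} [TopologicalSpace X] {G : Type*} [SMul G X]
    (χ : G → ℂ) (T : Dst X) : Prop :=
  ∀ (g : G) (f₁ f₂ : SSp X), (∀ x, f₂.1 x = f₁.1 (g • x)) → T f₂ = χ g * T f₁

/-- `T ∈ D(Y)^{G,χ}` for a `G`-invariant subset `Y ⊆ X` (with the subspace topology
and the restricted action): `g·T = χ(g)·T` where `(g·T)(f) = T(y ↦ f(g·y))`. -/
def IsEqvDistOn {X : Type*} [TopologicalSpace X] {G : Type*} [SMul G X]
    (Y : Set X) (χ : G → ℂ) (T : Dst Y) : Prop :=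
  ∀ (g : G) (f₁ f₂ : SSp Y),
    (∀ (x : X) (hx : x ∈ Y) (hgx : g • x ∈ Y), f₂.1 ⟨x, hx⟩ = f₁.1 ⟨g • x, hgx⟩) →
    T f₂ = χ g * T f₁

/-! Restriction `S(X) → S(Z)` is surjective, because in an l-space every compact open subset of
the closed set `Z` is cut out by a compact open subset of `X`, and its kernel consists of the
extensions by zero of elements of `S(U)`. An equivariant `T` pulls back to an equivariant
distribution on `U`, which vanishes; so `T` kills the kernel of restriction and factors as
`S ∘ restrict`. Surjectivity of restriction makes `S` equivariant on `Z`, hence `S = 0`. -/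

open Set Topology

section LSpace

variable {X : Type*} [TopologicalSpace X]

theorem IsClopen.isLocallyConstant_indicator_const {M : Type*} [Zero M] {W : Set X}
    (hW : IsClopen W) (c : M) : IsLocallyConstant (W.indicator fun _ => c) := by
  refine (IsLocallyConstant.iff_eventually_eq _).2 fun x => ?_
  by_cases hx : x ∈ W
  · filter_upwards [hW.isOpen.mem_nhds hx] with y hy
    rw [indicator_of_mem hy, indicator_of_mem hx]
  · filter_upwards [hW.isClosed.isOpen_compl.mem_nhds hx] with y hy
    rw [indicator_of_notMem hy, indicator_of_notMem hx]

theorem IsLocallyConstant.finite_range_of_hasCompactSupport {M : Type*} [Zero M] {f : X → M}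
    (hf : IsLocallyConstant f) (hfc : HasCompactSupport f) : (range f).Finite := by
  have : CompactSpace (tsupport f) := isCompact_iff_compactSpace.1 hfc.isCompact
  have hK : (range fun x : tsupport f => f x).Finite :=
    (hf.comp_continuous continuous_subtype_val).range_finite
  refine (hK.insert 0).subset ?_
  rintro _ ⟨x, rfl⟩
  by_cases hx : x ∈ tsupport f
  · exact mem_insert_of_mem _ ⟨⟨x, hx⟩, rfl⟩
  · exact mem_insert_iff.2 (Or.inl (image_eq_zero_of_notMem_tsupport hx))

theorem IsLocallyConstant.extend_val_zero {M : Type*} [Zero M] [T2Space X] {U : Set X}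
    (hU : IsOpen U) {f : U → M} (hf : IsLocallyConstant f) (hfc : HasCompactSupport f) :
    IsLocallyConstant (Subtype.val.extend f 0 : X → M) := by
  refine (IsLocallyConstant.iff_eventually_eq _).2 fun x => ?_
  by_cases hx : x ∈ U
  · have hfib := hU.isOpenMap_subtype_val _ (hf.isOpen_fiber (f ⟨x, hx⟩))
    filter_upwards [hfib.mem_nhds ⟨⟨x, hx⟩, rfl, rfl⟩]
    rintro _ ⟨y, hy, rfl⟩
    rw [Subtype.val_injective.extend_apply, Function.extend_val_apply hx]
    exact hy
  · have hxK : x ∉ tsupport (Subtype.val.extend f 0 : X → M) := fun h =>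
      hx (image_subset_iff.2 (fun y _ => y.2)
        (hfc.tsupport_extend_zero_subset continuous_subtype_val h))
    filter_upwards [notMem_tsupport_iff_eventuallyEq.1 hxK] with y hy
    rw [hy, Function.extend_val_apply' hx, Pi.zero_apply, Pi.zero_apply]

variable [LocallyCompactSpace X] [T2Space X] [TotallyDisconnectedSpace X]

theorem IsCompact.exists_isClopen_isCompact_between {K O : Set X} (hK : IsCompact K)
    (hO : IsOpen O) (hKO : K ⊆ O) : ∃ W, IsClopen W ∧ IsCompact W ∧ K ⊆ W ∧ W ⊆ O := by
  have hloc : ∀ x ∈ K, ∃ V, IsClopen V ∧ IsCompact V ∧ x ∈ V ∧ V ⊆ O := by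
    intro x hx
    obtain ⟨L, hL, hxL, hLO⟩ := exists_compact_subset hO (hKO hx)
    obtain ⟨V, hV, hxV, hVL⟩ :=
      loc_compact_Haus_tot_disc_of_zero_dim.mem_nhds_iff.1 (mem_interior_iff_mem_nhds.1 hxL)
    exact ⟨V, hV, hL.of_isClosed_subset hV.isClosed hVL, hxV, hVL.trans hLO⟩
  choose V hV hVc hxV hVO using hloc
  obtain ⟨t, hKt⟩ :=
    hK.elim_nhds_subcover' V fun x hx => (hV x hx).isOpen.mem_nhds (hxV x hx)
  exact ⟨⋃ x ∈ t, V x x.2, t.finite_toSet.isClopen_biUnion fun x _ => hV x x.2,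
    t.finite_toSet.isCompact_biUnion fun x _ => hVc x x.2, hKt,
    iUnion₂_subset fun x _ => hVO x x.2⟩

theorem IsClosed.exists_isClopen_isCompact_preimage_val_eq {Z : Set X} (hZ : IsClosed Z)
    {K : Set Z} (hK : IsClopen K) (hKc : IsCompact K) :
    ∃ W : Set X, IsClopen W ∧ IsCompact W ∧ Subtype.val ⁻¹' W = K := by
  have hO : IsOpen (Subtype.val '' Kᶜ)ᶜ :=
    (hZ.isClosedEmbedding_subtypeVal.isClosedMap _ hK.isOpen.isClosed_compl).isOpen_compl
  have hKO : Subtype.val '' K ⊆ (Subtype.val '' Kᶜ)ᶜ := by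
    rintro _ ⟨z, hz, rfl⟩ ⟨w, hw, hwz⟩
    exact hw (Subtype.val_injective hwz ▸ hz)
  obtain ⟨W, hW, hWc, hKW, hWO⟩ :=
    (hKc.image continuous_subtype_val).exists_isClopen_isCompact_between hO hKO
  refine ⟨W, hW, hWc, Subset.antisymm (fun z hz => ?_) (image_subset_iff.1 hKW)⟩
  by_contra hzK
  exact hWO hz ⟨z, hzK, rfl⟩

end LSpace

namespace SSp

variable {X : Type*} [TopologicalSpace X]

theorem indicator_const_mem {W : Set X} (hW : IsClopen W) (hWc : IsCompact W) (c : ℂ) :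
    W.indicator (fun _ => c) ∈ SSp X :=
  ⟨hW.isLocallyConstant_indicator_const c,
    HasCompactSupport.intro' hWc hW.isClosed fun _ hx => indicator_of_notMem hx _⟩

theorem comp_smul_mem {G : Type*} [Group G] [MulAction G X] [ContinuousConstSMul G X]
    (f : SSp X) (g : G) : (fun x => f.1 (g • x)) ∈ SSp X :=
  ⟨f.2.1.comp_continuous (continuous_const_smul g), f.2.2.comp_homeomorph (Homeomorph.smul g)⟩

def restrict {Z : Set X} (hZ : IsClosed Z) : SSp X →ₗ[ℂ] SSp Z :=
  (LinearMap.funLeft ℂ ℂ ((↑) : Z → X)).restrict fun _ hf =>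
    ⟨hf.1.comp_continuous continuous_subtype_val,
      hf.2.comp_isClosedEmbedding hZ.isClosedEmbedding_subtypeVal⟩

@[simp]
theorem restrict_apply {Z : Set X} (hZ : IsClosed Z) (f : SSp X) (z : Z) :
    (restrict hZ f).1 z = f.1 z :=
  rfl

def extendByZero [T2Space X] {U : Set X} (hU : IsOpen U) : SSp U →ₗ[ℂ] SSp X :=
  (Function.ExtendByZero.linearMap ℂ ((↑) : U → X)).restrict fun _ hf =>
    ⟨hf.1.extend_val_zero hU hf.2, hf.2.extend_zero continuous_subtype_val⟩

@[simp]
theorem extendByZero_apply [T2Space X] {U : Set X} (hU : IsOpen U) (f : SSp U) :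
    (extendByZero hU f).1 = Subtype.val.extend f.1 0 :=
  rfl

theorem ker_restrict_le_range_extendByZero [T2Space X] {Z U : Set X} (hZ : IsClosed Z)
    (hU : IsOpen U) (hZU : Zᶜ ⊆ U) :
    LinearMap.ker (restrict hZ) ≤ LinearMap.range (extendByZero hU) := by
  intro f hf
  have hf0 : ∀ x ∉ U, f.1 x = 0 := fun x hx =>
    congr_arg (fun h : SSp Z => h.1 ⟨x, not_not.1 (mt (@hZU x) hx)⟩) hf
  have hsupp : tsupport f.1 ⊆ U :=
    ((f.2.1.isClopen_fiber 0).isOpen.isClosed_compl.closure_subset_iff.2 fun _ => id).trans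
      fun x hx => not_not.1 (mt (hf0 x) hx)
  have hKc : IsCompact (Subtype.val ⁻¹' tsupport f.1 : Set U) :=
    (IsInducing.subtypeVal.isCompact_preimage_iff (by rwa [Subtype.range_coe])).2 f.2.2
  refine ⟨⟨f.1 ∘ Subtype.val, f.2.1.comp_continuous continuous_subtype_val,
    HasCompactSupport.intro' hKc ((isClosed_tsupport _).preimage continuous_subtype_val)
      fun _ hx => image_eq_zero_of_notMem_tsupport (f := f.1) hx⟩, ?_⟩
  ext x
  by_cases hx : x ∈ U
  · exact Function.extend_val_apply hx
  · exact (Function.extend_val_apply' hx).trans (hf0 x hx).symm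

theorem restrict_surjective [LocallyCompactSpace X] [T2Space X] [TotallyDisconnectedSpace X]
    {Z : Set X} (hZ : IsClosed Z) : Function.Surjective (restrict hZ) := by
  intro f
  have hfib : ∀ c : ℂ, ∃ W : Set X, IsClopen W ∧ IsCompact W ∧
      (c ≠ 0 → Subtype.val ⁻¹' W = {z | f.1 z = c}) := by
    intro c
    by_cases hc : c = 0
    · exact ⟨∅, isClopen_empty, isCompact_empty, fun h => (h hc).elim⟩
    · obtain ⟨W, hW, hWc, hWZ⟩ := hZ.exists_isClopen_isCompact_preimage_val_eq
        (f.2.1.isClopen_fiber c)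
        (f.2.2.isCompact_preimage f.2.1.continuous isClosed_singleton (Ne.symm hc))
      exact ⟨W, hW, hWc, fun _ => hWZ⟩
  choose W hW hWc hWZ using hfib
  have hterm : ∀ (c : ℂ) (z : Z),
      (W c).indicator (fun _ => c) z = if f.1 z = c then c else 0 := by
    intro c z
    by_cases hc : c = 0
    · simp [hc]
    · simp [indicator_apply, ← Set.mem_preimage (f := Subtype.val), hWZ c hc]
  have hfin := f.2.1.finite_range_of_hasCompactSupport f.2.2
  refine ⟨⟨∑ c ∈ hfin.toFinset, (W c).indicator (fun _ => c),
    Submodule.sum_mem _ fun c _ => indicator_const_mem (hW c) (hWc c) c⟩, ?_⟩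
  ext z
  simp [Finset.sum_apply, hterm, Finset.sum_ite_eq]

end SSp

theorem smul_mem_iff_of_forall_smul_mem {G X : Type*} [Group G] [MulAction G X] {U : Set X}
    (hUinv : ∀ (g : G) (x : X), x ∈ U → g • x ∈ U) (g : G) (x : X) : g • x ∈ U ↔ x ∈ U :=
  ⟨fun hgx => inv_smul_smul g x ▸ hUinv g⁻¹ _ hgx, hUinv g x⟩

section Equivariance

variable {X : Type*} [TopologicalSpace X] {G : Type*} [Group G] [MulAction G X] {χ : G → ℂ}

theorem IsEqvDist.isEqvDistOn_comp_extendByZero [T2Space X] {T : Dst X} (hT : IsEqvDist χ T)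
    {U : Set X} (hU : IsOpen U) (hUinv : ∀ (g : G) (x : X), x ∈ U → g • x ∈ U) :
    IsEqvDistOn U χ (T ∘ₗ SSp.extendByZero hU) := by
  intro g f₁ f₂ hf
  refine hT g _ _ fun x => ?_
  simp only [SSp.extendByZero_apply]
  by_cases hx : x ∈ U
  · rw [Function.extend_val_apply hx, Function.extend_val_apply (hUinv g x hx)]
    exact hf x hx (hUinv g x hx)
  · have hgx : g • x ∉ U := mt (smul_mem_iff_of_forall_smul_mem hUinv g x).1 hx
    rw [Function.extend_val_apply' hx, Function.extend_val_apply' hgx, Pi.zero_apply,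
      Pi.zero_apply]

theorem IsEqvDist.isEqvDistOn_of_comp_restrict [LocallyCompactSpace X] [T2Space X]
    [TotallyDisconnectedSpace X] [ContinuousConstSMul G X] {Z : Set X} (hZ : IsClosed Z)
    (hZinv : ∀ (g : G) (x : X), x ∈ Z → g • x ∈ Z) {S : Dst Z}
    (hS : IsEqvDist χ (S ∘ₗ SSp.restrict hZ)) : IsEqvDistOn Z χ S := by
  intro g f₁ f₂ hf
  obtain ⟨F, rfl⟩ := SSp.restrict_surjective hZ f₁
  have hF₂ : f₂ = SSp.restrict hZ ⟨_, SSp.comp_smul_mem F g⟩ := by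
    ext z
    exact hf z z.2 (hZinv g z z.2)
  rw [hF₂]
  exact hS g F _ fun _ => rfl

end Equivariance

theorem stmt4_general
    (G : Type*) [Group G] [TopologicalSpace G]
    (X : Type*) [TopologicalSpace X] [LocallyCompactSpace X] [T2Space X]
    [TotallyDisconnectedSpace X]
    [MulAction G X] [ContinuousSMul G X]
    (χ : G →* ℂˣ)
    (U : Set X) (hUopen : IsOpen U)
    (hUinv : ∀ (g : G) (x : X), x ∈ U → g • x ∈ U)
    (hU : ∀ T : Dst ↥U, IsEqvDistOn U (fun g => (χ g : ℂ)) T → T = 0)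
    (hZ : ∀ T : Dst ↥(Set.univ \ U), IsEqvDistOn (Set.univ \ U) (fun g => (χ g : ℂ)) T → T = 0)
    (T : Dst X) (hT : IsEqvDist (fun g => (χ g : ℂ)) T) : T = 0 := by
  have hZc : IsClosed (univ \ U) := by
    rw [← compl_eq_univ_sdiff]
    exact hUopen.isClosed_compl
  have hZinv : ∀ (g : G) (x : X), x ∈ univ \ U → g • x ∈ univ \ U := fun g x hx =>
    ⟨trivial, mt (smul_mem_iff_of_forall_smul_mem hUinv g x).1 hx.2⟩
  have hTU : T ∘ₗ SSp.extendByZero hUopen = 0 :=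
    hU _ (hT.isEqvDistOn_comp_extendByZero hUopen hUinv)
  have hker : T ∈ (LinearMap.ker (SSp.restrict hZc)).dualAnnihilator := by
    refine (Submodule.mem_dualAnnihilator _).2 fun f hf => ?_
    have hZU : (univ \ U)ᶜ ⊆ U := by rw [← compl_eq_univ_sdiff, compl_compl]
    obtain ⟨h, rfl⟩ := SSp.ker_restrict_le_range_extendByZero hZc hUopen hZU hf
    exact LinearMap.congr_fun hTU h
  rw [← LinearMap.range_dualMap_eq_dualAnnihilator_ker] at hker
  obtain ⟨S, rfl⟩ := hker
  rw [hZ S (hT.isEqvDistOn_of_comp_restrict hZc hZinv), map_zero]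

/-- if an l-group `G` acts continuously on an l-space `X`, `U ⊆ X` is an
open `G`-invariant subset with closed complement `Z = X \ U`, and
`D(U)^{G,χ} = 0 = D(Z)^{G,χ}`, then `D(X)^{G,χ} = 0`. -/
theorem stmt4
    (G : Type*) [Group G] [TopologicalSpace G] [IsTopologicalGroup G]
    [LocallyCompactSpace G] [T2Space G] [TotallyDisconnectedSpace G]
    (X : Type*) [TopologicalSpace X] [LocallyCompactSpace X] [T2Space X]
    [TotallyDisconnectedSpace X]
    [MulAction G X] [ContinuousSMul G X]
    (χ : G →* ℂˣ)
    (U : Set X) (hUopen : IsOpen U)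
    (hUinv : ∀ (g : G) (x : X), x ∈ U → g • x ∈ U)
    (hU : ∀ T : Dst ↥U, IsEqvDistOn U (fun g => (χ g : ℂ)) T → T = 0)
    (hZ : ∀ T : Dst ↥(Set.univ \ U), IsEqvDistOn (Set.univ \ U) (fun g => (χ g : ℂ)) T → T = 0)
    (T : Dst X) (hT : IsEqvDist (fun g => (χ g : ℂ)) T) : T = 0 :=
  stmt4_general G X χ U hUopen hUinv hU hZ T hT
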